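/- Let (Ω, 𝔉, P) be a probability space, let X and W be measurable spaces, and let (h_{(x,w)})_{(x,w)∈X×W} be a centered Gaussian process on Ω with product covariance function E[h_{(x,w)}·h_{(x′,w′)}] = k_X(x, x′)·k_W(w, w′), such that each h_{(x,w)} ∈ L²(Ω, P) and for each x the map w ↦ h_{(x,w)} ∈ L²(Ω, P) is strongly measurable. Let (ν_{x,z})_{(x,z)∈X×Z} be a family of finite measures on W such that for each (x, z) the map w ↦ h_{(x,w)} is Bochner integrable in L²(Ω, P) with respect to ν_{x,z}, and define g_{(x,z)} = ∫ h_{(x,w)} dν_{x,z}(w) (Bochner integral in L²(Ω, P)). Then (g_{(x,z)}) is a centered Gaussian process with covariance function q((x, z), (x′, z′)) = k_X(x, x′) · ∬ k_W(w, w′) dν_{x,z}(w) dν_{x′,z′}(w′). -/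

import Mathlib

/-!
The centered Gaussian elements of `L²(P)` form a closed set: an `L²` limit is a limit in
distribution, and the characteristic functions `exp (-‖u‖² t² / 2)` of Gaussian laws depend
continuously on `u`. Since the finite linear combinations of a centered Gaussian process `h` are
centered Gaussian, so is everything in the closed linear span of `h`, and each `g (x, z)` lies in
this span, being a Bochner integral of an `h`-valued map. The covariance follows by pulling the
inner product of `L²` through both Bochner integrals.
-/

open MeasureTheory ProbabilityTheory

/-- A process `(f_t)_{t ∈ T}` on a measure space `(Ω, P)` is a centered Gaussian process
if every finite real linear combination `∑ i, c i * f (t i)` is a centered real Gaussian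
random variable. -/
def IsCenteredGaussianProcess {Ω T : Type*} [MeasurableSpace Ω]
    (P : Measure Ω) (f : T → Ω → ℝ) : Prop :=
  ∀ (n : ℕ) (t : Fin n → T) (c : Fin n → ℝ), ∃ v : NNReal,
    P.map (fun ω => ∑ i, c i * f (t i) ω) = gaussianReal 0 v

open Filter Topology Set Submodule
open scoped NNReal RealInnerProductSpace

theorem integral_mem_of_isClosed {α E : Type*} [MeasurableSpace α] {μ : Measure α}
    [NormedAddCommGroup E] [NormedSpace ℝ E] [CompleteSpace E] {V : Submodule ℝ E}
    (hV : IsClosed (V : Set E)) {f : α → E} (hf : ∀ a, f a ∈ V) : ∫ a, f a ∂μ ∈ V := by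
  have := hV.completeSpace_coe
  have h : ∫ a, f a ∂μ = V.subtypeₗᵢ (∫ a, (⟨f a, hf a⟩ : V) ∂μ) :=
    V.subtypeₗᵢ.integral_comp_comm fun a => ⟨f a, hf a⟩
  exact h ▸ Subtype.prop _

theorem inner_integral_integral {α β E : Type*} [MeasurableSpace α] [MeasurableSpace β]
    {μ : Measure α} {ν : Measure β}
    [NormedAddCommGroup E] [InnerProductSpace ℝ E] [CompleteSpace E] {f : α → E} {g : β → E}
    (hf : Integrable f μ) (hg : Integrable g ν) :
    ⟪∫ a, f a ∂μ, ∫ b, g b ∂ν⟫ = ∫ b, ∫ a, ⟪f a, g b⟫ ∂μ ∂ν := by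
  rw [← integral_inner hg]
  congr with b
  rw [real_inner_comm, ← integral_inner hf]
  simp only [real_inner_comm]

theorem integral_sq_gaussianReal_zero (v : ℝ≥0) : ∫ x, x ^ 2 ∂gaussianReal 0 v = v := by
  rw [← variance_of_integral_eq_zero aemeasurable_id' integral_id_gaussianReal,
    variance_fun_id_gaussianReal]

section L2

variable {Ω : Type*} [MeasurableSpace Ω] {P : Measure Ω}

theorem MeasureTheory.L2.real_inner_eq_integral_mul (f g : Lp ℝ 2 P) :
    ⟪f, g⟫ = ∫ ω, f ω * g ω ∂P := by
  simp [L2.inner_def, mul_comm]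

theorem MeasureTheory.Lp.coeFn_sum_smul {ι : Type*} (s : Finset ι) (a : ι → ℝ)
    (F : ι → Lp ℝ 2 P) :
    ⇑(∑ i ∈ s, a i • F i) =ᵐ[P] fun ω => ∑ i ∈ s, a i * F i ω := by
  filter_upwards [Lp.coeFn_fun_finsetSum s (fun i => a i • F i),
    s.eventually_all.2 fun i _ => Lp.coeFn_smul (a i) (F i)] with ω hsum hsmul
  rw [hsum]
  exact Finset.sum_congr rfl fun i hi => hsmul i hi

theorem map_eq_gaussianReal_nnnorm_sq {f : Lp ℝ 2 P} {v : ℝ≥0}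
    (hf : P.map f = gaussianReal 0 v) : P.map f = gaussianReal 0 (‖f‖₊ ^ 2) := by
  suffices (v : ℝ) = ‖f‖ ^ 2 by rw [hf]; congr; exact NNReal.eq (by simpa using this)
  calc (v : ℝ) = ∫ x, x ^ 2 ∂P.map f := by rw [hf, integral_sq_gaussianReal_zero]
    _ = ∫ ω, f ω * f ω ∂P := by
      rw [integral_map (Lp.aestronglyMeasurable f).aemeasurable (by fun_prop)]
      simp only [sq]
    _ = ‖f‖ ^ 2 := by rw [← L2.real_inner_eq_integral_mul, real_inner_self_eq_norm_sq]

theorem isClosed_setOf_map_eq_gaussianReal [IsProbabilityMeasure P] :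
    IsClosed {f : Lp ℝ 2 P | ∃ v : ℝ≥0, P.map f = gaussianReal 0 v} := by
  refine isClosed_of_closure_subset fun f hf => ?_
  obtain ⟨u, hu, hlim⟩ := mem_closure_iff_seq_limit.1 hf
  refine ⟨‖f‖₊ ^ 2, Measure.ext_of_charFun (funext fun t => ?_)⟩
  have hlaw : Tendsto (fun k => charFun (P.map (u k)) t) atTop (𝓝 (charFun (P.map f) t)) :=
    ProbabilityMeasure.tendsto_iff_tendsto_charFun.1
      ((tendstoInMeasure_of_tendsto_Lp hlim).tendstoInDistribution
        fun k => (Lp.aestronglyMeasurable _).aemeasurable).tendsto t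
  have hgauss : Tendsto (fun k => charFun (P.map (u k)) t) atTop
      (𝓝 (charFun (gaussianReal 0 (‖f‖₊ ^ 2)) t)) := by
    have hcont : Continuous fun g : Lp ℝ 2 P => charFun (gaussianReal 0 (‖g‖₊ ^ 2)) t := by
      simp only [charFun_gaussianReal]
      fun_prop
    refine (hcont.tendsto f |>.comp hlim).congr fun k => ?_
    obtain ⟨v, hv⟩ := hu k
    simp [map_eq_gaussianReal_nnnorm_sq hv]
  exact tendsto_nhds_unique hlaw hgauss

theorem isCenteredGaussianProcess_iff_sum_smul {T : Type*} {F : T → Lp ℝ 2 P} :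
    IsCenteredGaussianProcess P (fun t => ⇑(F t)) ↔
      ∀ (n : ℕ) (t : Fin n → T) (c : Fin n → ℝ), ∃ v : ℝ≥0,
        P.map ⇑(∑ i, c i • F (t i)) = gaussianReal 0 v := by
  simp only [IsCenteredGaussianProcess,
    Measure.map_congr (Lp.coeFn_sum_smul Finset.univ _ fun i => F _)]

theorem span_range_subset_setOf_map_eq_gaussianReal {T : Type*} {F : T → Lp ℝ 2 P}
    (hF : IsCenteredGaussianProcess P (fun t => ⇑(F t))) :
    (span ℝ (range F) : Set (Lp ℝ 2 P)) ⊆ {f | ∃ v : ℝ≥0, P.map f = gaussianReal 0 v} := by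
  intro f hf
  obtain ⟨n, c, fs, rfl⟩ := mem_span_set'.1 hf
  choose t ht using fun i => (fs i).2
  simp only [← ht]
  exact isCenteredGaussianProcess_iff_sum_smul.1 hF n t c

theorem IsCenteredGaussianProcess.of_mem_topologicalClosure_span [IsProbabilityMeasure P]
    {S T : Type*} {F : T → Lp ℝ 2 P} {G : S → Lp ℝ 2 P}
    (hF : IsCenteredGaussianProcess P (fun t => ⇑(F t)))
    (hG : ∀ s, G s ∈ (span ℝ (range F)).topologicalClosure) :
    IsCenteredGaussianProcess P (fun s => ⇑(G s)) := by
  refine isCenteredGaussianProcess_iff_sum_smul.2 fun n s c => ?_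
  have hmem : ∑ i, c i • G (s i) ∈ (span ℝ (range F)).topologicalClosure :=
    sum_mem fun i _ => smul_mem _ _ (hG (s i))
  exact closure_minimal (span_range_subset_setOf_map_eq_gaussianReal hF)
    isClosed_setOf_map_eq_gaussianReal hmem

end L2

theorem conditional_mean_process_proxy_general
    {Ω : Type*} [MeasurableSpace Ω] (P : Measure Ω) [IsProbabilityMeasure P]
    {X W Z : Type*} [MeasurableSpace W]
    (h : X × W → Lp ℝ 2 P)
    (hGP : IsCenteredGaussianProcess P (fun p => ⇑(h p)))
    (kX : X → X → ℝ) (kW : W → W → ℝ)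
    (hcov : ∀ x x' w w', (∫ ω, h (x, w) ω * h (x', w') ω ∂P) = kX x x' * kW w w')
    (ν : X × Z → Measure W)
    (hint : ∀ x z, Integrable (fun w => h (x, w)) (ν (x, z)))
    (g : X × Z → Lp ℝ 2 P) (hg : ∀ x z, g (x, z) = ∫ w, h (x, w) ∂(ν (x, z))) :
    IsCenteredGaussianProcess P (fun p => ⇑(g p)) ∧
    ∀ x z x' z', (∫ ω, g (x, z) ω * g (x', z') ω ∂P)
      = kX x x' * ∫ w', ∫ w, kW w w' ∂(ν (x, z)) ∂(ν (x', z')) := by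
  refine ⟨hGP.of_mem_topologicalClosure_span fun ⟨x, z⟩ => ?_, fun x z x' z' => ?_⟩
  · rw [hg]
    exact integral_mem_of_isClosed (span ℝ (range h)).isClosed_topologicalClosure
      fun w => le_topologicalClosure _ (subset_span ⟨(x, w), rfl⟩)
  · rw [← L2.real_inner_eq_integral_mul, hg, hg, inner_integral_integral (hint x z) (hint x' z')]
    simp_rw [L2.real_inner_eq_integral_mul, hcov, integral_const_mul]

/-- Conditional mean process for the Proxy setting. If `(h_{(x,w)})` is a centered
Gaussian process with product covariance `E[h_{(x,w)} h_{(x′,w′)}] = k_X(x,x′)·k_W(w,w′)`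
and `g_{(x,z)} = ∫ h_{(x,w)} dν_{x,z}(w)`, then `(g_{(x,z)})` is a centered Gaussian
process with covariance
`q((x,z),(x′,z′)) = k_X(x,x′) · ∬ k_W(w,w′) dν_{x,z}(w) dν_{x′,z′}(w′)`. -/
theorem conditional_mean_process_proxy
    {Ω : Type*} [MeasurableSpace Ω] (P : Measure Ω) [IsProbabilityMeasure P]
    {X W Z : Type*} [MeasurableSpace X] [MeasurableSpace W]
    (h : X × W → Lp ℝ 2 P)
    (hmeas : ∀ x, StronglyMeasurable (fun w => h (x, w)))
    (hGP : IsCenteredGaussianProcess P (fun p => ⇑(h p)))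
    (kX : X → X → ℝ) (kW : W → W → ℝ)
    (hcov : ∀ x x' w w', (∫ ω, h (x, w) ω * h (x', w') ω ∂P) = kX x x' * kW w w')
    (ν : X × Z → Measure W) (hfin : ∀ p, IsFiniteMeasure (ν p))
    (hint : ∀ x z, Integrable (fun w => h (x, w)) (ν (x, z)))
    (g : X × Z → Lp ℝ 2 P) (hg : ∀ x z, g (x, z) = ∫ w, h (x, w) ∂(ν (x, z))) :
    IsCenteredGaussianProcess P (fun p => ⇑(g p)) ∧
    ∀ x z x' z', (∫ ω, g (x, z) ω * g (x', z') ω ∂P)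
      = kX x x' * ∫ w', ∫ w, kW w w' ∂(ν (x, z)) ∂(ν (x', z')) :=
  conditional_mean_process_proxy_general P h hGP kX kW hcov ν hint g hg
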